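/- In any honest solution to f₁³ + f₂³ = f₃³ + f₄³ with f_j real binary quadratic forms satisfying f₁ + f₂ = T(f₃ + f₄) for some real T with T(T³−1) ≠ 0, one must have T > 0. -/

import Mathlib

/-!
Since `f₁³ + f₂³ = (f₁ + f₂) Q(f₁, f₂)` with `Q(s, t) = s² − st + t²`, the relation
`f₁ + f₂ = T (f₃ + f₄)` lets us cancel `f₃ + f₄ ≠ 0` (non-proportionality of `f₃, f₄`) to get
`T · Q(f₁, f₂) = Q(f₃, f₄)`. The form `Q` is positive definite, so for `T ≤ 0` both `f₃` and `f₄`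
vanish at every real point, forcing `f₃ + f₄ = 0`.
-/

/-- Two real binary forms are non-proportional if neither is a scalar multiple
of the other. -/
def NonPropR (f g : MvPolynomial (Fin 2) ℝ) : Prop :=
  (∀ c : ℝ, g ≠ c • f) ∧ (∀ c : ℝ, f ≠ c • g)

theorem NonPropR.add_ne_zero {f g : MvPolynomial (Fin 2) ℝ} (h : NonPropR f g) : f + g ≠ 0 :=
  fun hfg => h.1 (-1) (by rw [neg_one_smul]; exact eq_neg_of_add_eq_zero_right hfg)

section OrderedRing

variable {R : Type*} [CommRing R] [LinearOrder R] [IsStrictOrderedRing R]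

theorem sq_sub_mul_add_sq_nonneg (s t : R) : 0 ≤ s ^ 2 - s * t + t ^ 2 := by
  nlinarith [sq_nonneg (s - t), sq_nonneg (s + t)]

theorem add_eq_zero_of_sq_sub_mul_add_sq_nonpos {s t : R} (h : s ^ 2 - s * t + t ^ 2 ≤ 0) :
    s + t = 0 := by
  have hs : s = 0 := by nlinarith [sq_nonneg (s - t), sq_nonneg (s + t)]
  have ht : t = 0 := by nlinarith [sq_nonneg (s - t), sq_nonneg (s + t)]
  rw [hs, ht, add_zero]

end OrderedRing

namespace MvPolynomial

theorem C_mul_sq_sub_mul_add_sq_eq {σ R : Type*} [CommRing R] [IsDomain R]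
    {f₁ f₂ f₃ f₄ : MvPolynomial σ R} {T : R}
    (heq : f₁ ^ 3 + f₂ ^ 3 = f₃ ^ 3 + f₄ ^ 3) (hT : f₁ + f₂ = C T * (f₃ + f₄))
    (h₃₄ : f₃ + f₄ ≠ 0) :
    C T * (f₁ ^ 2 - f₁ * f₂ + f₂ ^ 2) = f₃ ^ 2 - f₃ * f₄ + f₄ ^ 2 := by
  refine mul_left_cancel₀ h₃₄ ?_
  linear_combination heq - (f₁ ^ 2 - f₁ * f₂ + f₂ ^ 2) * hT

variable {σ R : Type*} [Field R] [LinearOrder R] [IsStrictOrderedRing R]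

theorem add_eq_zero_of_C_mul_sq_sub_mul_add_sq_eq {f₁ f₂ f₃ f₄ : MvPolynomial σ R} {T : R}
    (hT : T ≤ 0) (h : C T * (f₁ ^ 2 - f₁ * f₂ + f₂ ^ 2) = f₃ ^ 2 - f₃ * f₄ + f₄ ^ 2) :
    f₃ + f₄ = 0 := by
  refine funext fun x => ?_
  have hx := congrArg (eval x) h
  simp only [map_mul, map_add, map_sub, map_pow, eval_C] at hx
  simp only [map_add, map_zero]
  refine add_eq_zero_of_sq_sub_mul_add_sq_nonpos ?_
  rw [← hx]
  exact mul_nonpos_of_nonpos_of_nonneg hT (sq_sub_mul_add_sq_nonneg _ _)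

end MvPolynomial

theorem stmt_16_general (f₁ f₂ f₃ f₄ : MvPolynomial (Fin 2) ℝ) (T : ℝ)
    (hp : NonPropR f₁ f₂ ∧ NonPropR f₁ f₃ ∧ NonPropR f₁ f₄ ∧
          NonPropR f₂ f₃ ∧ NonPropR f₂ f₄ ∧ NonPropR f₃ f₄)
    (heq : f₁^3 + f₂^3 = f₃^3 + f₄^3)
    (hT : f₁ + f₂ = T • (f₃ + f₄)) :
    0 < T := by
  have h₃₄ : f₃ + f₄ ≠ 0 := hp.2.2.2.2.2.add_ne_zero
  rw [MvPolynomial.smul_eq_C_mul] at hT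
  have hQ := MvPolynomial.C_mul_sq_sub_mul_add_sq_eq heq hT h₃₄
  by_contra! hT_nonpos
  exact h₃₄ (MvPolynomial.add_eq_zero_of_C_mul_sq_sub_mul_add_sq_eq hT_nonpos hQ)

theorem stmt_16 (f₁ f₂ f₃ f₄ : MvPolynomial (Fin 2) ℝ) (T : ℝ)
    (h₁ : f₁.IsHomogeneous 2) (h₂ : f₂.IsHomogeneous 2)
    (h₃ : f₃.IsHomogeneous 2) (h₄ : f₄.IsHomogeneous 2)
    (hp : NonPropR f₁ f₂ ∧ NonPropR f₁ f₃ ∧ NonPropR f₁ f₄ ∧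
          NonPropR f₂ f₃ ∧ NonPropR f₂ f₄ ∧ NonPropR f₃ f₄)
    (heq : f₁^3 + f₂^3 = f₃^3 + f₄^3) (hne : f₁^3 + f₂^3 ≠ 0)
    (hT : f₁ + f₂ = T • (f₃ + f₄)) (hT0 : T * (T^3 - 1) ≠ 0) :
    0 < T :=
  stmt_16_general f₁ f₂ f₃ f₄ T hp heq hT
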